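/- If G is a graph of diameter 2 containing no triangle and no 4-cycle, then χ_μ(G) = χ_1(G). -/

import Mathlib

open SimpleGraph

variable {V W : Type*}

/-- Two vertices of `X` are `X`-visible if some geodesic between them has all
internal vertices outside `X`; `X` is a mutual-visibility set if this holds
for every reachable pair of vertices of `X`. -/
def IsMVSet (G : SimpleGraph V) (X : Set V) : Prop :=
  ∀ x ∈ X, ∀ y ∈ X, x ≠ y → G.Reachable x y →
    ∃ p : G.Walk x y, p.length = G.dist x y ∧
      ∀ z ∈ p.support, z ≠ x → z ≠ y → z ∉ X

/-- An independent mutual-visibility set. -/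
def IsIMVSet (G : SimpleGraph V) (X : Set V) : Prop :=
  (∀ x ∈ X, ∀ y ∈ X, ¬ G.Adj x y) ∧ IsMVSet G X

/-- The mutual-visibility chromatic number: the least `k` such that the vertex
set partitions into `k` mutual-visibility sets. -/
noncomputable def mvChrom (G : SimpleGraph V) : ℕ :=
  sInf {k | ∃ f : V → Fin k, ∀ i, IsMVSet G (f ⁻¹' {i})}

/-- The independent mutual-visibility chromatic number. -/
noncomputable def imvChrom (G : SimpleGraph V) : ℕ :=
  sInf {k | ∃ f : V → Fin k, ∀ i, IsIMVSet G (f ⁻¹' {i})}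

/-- The chromatic number, as a natural number. -/
noncomputable def chromNat (G : SimpleGraph V) : ℕ :=
  sInf {k | G.Colorable k}

/-- The independent mutual-visibility number `μᵢ(G)`. -/
noncomputable def imvNum (G : SimpleGraph V) : ℕ :=
  sSup {n | ∃ s : Finset V, IsIMVSet G ↑s ∧ s.card = n}

/-- The independence number `α(G)`. -/
noncomputable def indepNum (G : SimpleGraph V) : ℕ :=
  sSup {n | ∃ s : Finset V, (∀ x ∈ s, ∀ y ∈ s, ¬ G.Adj x y) ∧ s.card = n}

/-- The 1-defective chromatic number `χ₁(G)`: the least `k` admitting a `k`-coloring in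
which every vertex has at most one neighbor of its own color. -/
noncomputable def defChrom1 (G : SimpleGraph V) : ℕ :=
  sInf {k | ∃ f : V → Fin k, ∀ v : V, {w | G.Adj v w ∧ f w = f v}.Subsingleton}

/-!
In a `{C₃, C₄}`-free graph two vertices at distance two have exactly one common neighbour,
so the geodesic between them is unique. Hence, when the diameter is at most two, a set `X` is
a mutual-visibility set exactly when no vertex of `X` has two neighbours in `X`: such a vertex
is the unique middle vertex between those neighbours, and conversely a blocked geodesic has its
middle vertex in `X` adjacent to both ends. A partition into mutual-visibility sets is therefore
the same thing as a `1`-defective colouring.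
-/

namespace SimpleGraph.Walk

variable {G : SimpleGraph V}

lemma adj_of_mem_support_of_length_le_two {u v z : V} (p : G.Walk u v) (hp : p.length ≤ 2)
    (hz : z ∈ p.support) (hzu : z ≠ u) (hzv : z ≠ v) : G.Adj u z ∧ G.Adj z v := by
  match p, hp with
  | .nil, _ => simp_all
  | .cons _ .nil, _ => simp_all
  | .cons huw (.cons hwv .nil), _ =>
    obtain rfl : z = _ := by simpa [hzu, hzv] using hz
    exact ⟨huw, hwv⟩
  | .cons _ (.cons _ (.cons _ _)), hp => simp at hp

end SimpleGraph.Walk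

section MutualVisibility

variable {G : SimpleGraph V} {X : Set V}

lemma IsMVSet.adj_subsingleton (htf : G.CliqueFree 3)
    (hc4 : ∀ a b c d : V, G.Adj a b → G.Adj b c → G.Adj c d → G.Adj d a → a = c ∨ b = d)
    (hX : IsMVSet G X) {v : V} (hv : v ∈ X) : {w | G.Adj v w ∧ w ∈ X}.Subsingleton := by
  rintro y ⟨hvy, hy⟩ z ⟨hvz, hz⟩
  by_contra hyz
  have hyz_nadj : ¬G.Adj y z := isIndepSet_neighborSet_of_triangleFree G htf v hvy hvz hyz
  have hr : G.Reachable y z := hvy.symm.reachable.trans hvz.reachable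
  obtain ⟨p, hp, hvis⟩ := hX y hy z hz hyz hr
  have hdist : G.dist y z = 2 :=
    le_antisymm (dist_le (hvy.symm.toWalk.concat hvz))
      (hr.one_lt_dist_of_ne_of_not_adj hyz hyz_nadj)
  have hnil : ¬p.Nil := Walk.not_nil_of_ne hyz
  have hsnd_y : p.snd ≠ y := (p.adj_snd hnil).ne.symm
  have hsnd_z : p.snd ≠ z := fun h => hyz_nadj (h ▸ p.adj_snd hnil)
  obtain ⟨hy_snd, hsnd_z'⟩ := p.adj_of_mem_support_of_length_le_two (by omega)
    (p.getVert_mem_support 1) hsnd_y hsnd_z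
  have hsnd_v : p.snd = v := (hc4 y p.snd z v hy_snd hsnd_z' hvz.symm hvy).resolve_left hyz
  exact hvis p.snd (p.getVert_mem_support 1) hsnd_y hsnd_z (hsnd_v ▸ hv)

lemma isMVSet_of_adj_subsingleton (hle : ∀ u v : V, G.dist u v ≤ 2)
    (hX : ∀ v ∈ X, {w | G.Adj v w ∧ w ∈ X}.Subsingleton) : IsMVSet G X := by
  intro x hx y hy hxy hr
  obtain ⟨p, hp⟩ := hr.exists_walk_length_eq_dist
  refine ⟨p, hp, fun z hz hzx hzy hzX => hxy ?_⟩
  obtain ⟨hxz, hzy'⟩ := p.adj_of_mem_support_of_length_le_two (hp ▸ hle x y) hz hzx hzy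
  exact hX z hzX ⟨hxz.symm, hx⟩ ⟨hzy', hy⟩

lemma isMVSet_iff_adj_subsingleton (hle : ∀ u v : V, G.dist u v ≤ 2) (htf : G.CliqueFree 3)
    (hc4 : ∀ a b c d : V, G.Adj a b → G.Adj b c → G.Adj c d → G.Adj d a → a = c ∨ b = d) :
    IsMVSet G X ↔ ∀ v ∈ X, {w | G.Adj v w ∧ w ∈ X}.Subsingleton :=
  ⟨fun hX _ hv => hX.adj_subsingleton htf hc4 hv, isMVSet_of_adj_subsingleton hle⟩

end MutualVisibility

theorem stmt16 (G : SimpleGraph V)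
    (hle : ∀ u v : V, G.dist u v ≤ 2)
    (htf : G.CliqueFree 3)
    (hc4 : ∀ a b c d : V, G.Adj a b → G.Adj b c → G.Adj c d → G.Adj d a →
      a = c ∨ b = d) :
    mvChrom G = defChrom1 G := by
  unfold mvChrom defChrom1
  congr 1
  ext k
  refine exists_congr fun f => ?_
  simp only [isMVSet_iff_adj_subsingleton hle htf hc4]
  constructor
  · intro h v
    exact h (f v) v rfl
  · rintro h i v rfl
    exact h v
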